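/- arXiv:2407.01816 — 2 statements merged into one kernel-verified Lean document; each statement's English description precedes it below -/
import Mathlib

section
/- Assume the L log L condition Σ_{k=1}^∞ k·(log k)·p_k < ∞. Then for every c > 0, ∫_0^∞ φ(e^{−ct}) dt < ∞. -/
/-!
Since `∑ p k = 1` and `∑ k p k = m`, for `0 < u ≤ 1`
`φ u = (β / u) ∑ p k ((1 - u)^k - 1 + k u)`, and each bracket lies between `0` (Bernoulli)
and `u · min k (k² u / 2)` (second-order Taylor bound). Hence `φ (e^{-ct})` is dominated by
`β ∑ p k min k (k² e^{-ct} / 2)`. Cutting the `k`-th integral at `t = log k / c` bounds it by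
`(k log k + k / 2) / c`, which is summable against `p` by the `L log L` condition.
-/

open scoped ENNReal
open MeasureTheory Set Real Filter

section Bernoulli

variable {u : ℝ}

lemma one_sub_pow_sub_one_add_mul_nonneg (k : ℕ) (hu : u ≤ 2) :
    0 ≤ (1 - u) ^ k - 1 + k * u := by
  have := one_add_mul_le_pow (a := -u) (by linarith) k
  rw [← sub_eq_add_neg] at this
  linarith

lemma one_sub_pow_le_one_sub_mul_add_sq (k : ℕ) (h0 : 0 ≤ u) (h1 : u ≤ 1) :
    (1 - u) ^ k ≤ 1 - k * u + (k : ℝ) ^ 2 / 2 * u ^ 2 := by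
  induction k with
  | zero => simp
  | succ k ih =>
    have h : (1 - u) ^ k * (1 - u) ≤ (1 - k * u + (k : ℝ) ^ 2 / 2 * u ^ 2) * (1 - u) :=
      mul_le_mul_of_nonneg_right ih (by linarith)
    rw [pow_succ]
    push_cast
    nlinarith [mul_nonneg (mul_nonneg (sq_nonneg (k : ℝ)) (sq_nonneg u)) h0]

lemma one_sub_pow_sub_one_add_mul_le (k : ℕ) (h0 : 0 ≤ u) (h1 : u ≤ 1) :
    (1 - u) ^ k - 1 + k * u ≤ u * min (k : ℝ) ((k : ℝ) ^ 2 / 2 * u) := by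
  rw [mul_min_of_nonneg _ _ h0]
  refine le_min ?_ ?_
  · nlinarith [pow_le_one₀ (n := k) (by linarith : 0 ≤ 1 - u) (by linarith)]
  · nlinarith [one_sub_pow_le_one_sub_mul_add_sq k h0 h1]

end Bernoulli

section GeneratingFunction

variable {p : ℕ → ℝ} {m u : ℝ}

lemma hasSum_mul_one_sub_pow_sub_one_add_mul (hp : ∀ k, 0 ≤ p k) (hsum : HasSum p 1)
    (hm : HasSum (fun k : ℕ => (k : ℝ) * p k) m) (h0 : 0 ≤ u) (h1 : u ≤ 1) :
    HasSum (fun k : ℕ => p k * ((1 - u) ^ k - 1 + k * u))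
      ((∑' k, p k * (1 - u) ^ k) - 1 + u * m) := by
  have hpow : Summable fun k => p k * (1 - u) ^ k :=
    Summable.of_nonneg_of_le (fun k => mul_nonneg (hp k) (pow_nonneg (by linarith) _))
      (fun k => mul_le_of_le_one_right (hp k) (pow_le_one₀ (by linarith) (by linarith)))
      hsum.summable
  exact ((hpow.hasSum.sub hsum).add (hm.mul_left u)).congr_fun fun k => by ring

lemma ofReal_le_mul_tsum_ofReal_mul_min (hp : ∀ k, 0 ≤ p k) (hsum : HasSum p 1)
    (hm : HasSum (fun k : ℕ => (k : ℝ) * p k) m) (β : ℝ) (h0 : 0 < u) (h1 : u ≤ 1) :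
    ENNReal.ofReal (β * ((∑' k, p k * (1 - u) ^ k) - (1 - u)) / u - β * (1 - m)) ≤
      ENNReal.ofReal β *
        ∑' k : ℕ, ENNReal.ofReal (p k * min (k : ℝ) ((k : ℝ) ^ 2 / 2 * u)) := by
  have hsum' := (hasSum_mul_one_sub_pow_sub_one_add_mul hp hsum hm h0.le h1).div_const u
  have hterm_nonneg : ∀ k : ℕ, 0 ≤ p k * ((1 - u) ^ k - 1 + k * u) / u := fun k =>
    div_nonneg (mul_nonneg (hp k) (one_sub_pow_sub_one_add_mul_nonneg k (by linarith))) h0.le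
  have hφ : β * ((∑' k, p k * (1 - u) ^ k) - (1 - u)) / u - β * (1 - m) =
      β * ∑' k : ℕ, p k * ((1 - u) ^ k - 1 + k * u) / u := by
    rw [hsum'.tsum_eq]
    field_simp
    ring
  rw [hφ, ENNReal.ofReal_mul' (tsum_nonneg hterm_nonneg),
    ENNReal.ofReal_tsum_of_nonneg hterm_nonneg hsum'.summable]
  gcongr with k
  rw [mul_div_assoc]
  gcongr
  · exact hp k
  · rw [div_le_iff₀' h0]
    exact one_sub_pow_sub_one_add_mul_le k h0.le h1

end GeneratingFunction

section Integrals

variable {c : ℝ}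

lemma setLIntegral_Ioi_min_le {a T : ℝ} (haT : a ≤ T) (f g : ℝ → ℝ≥0∞) :
    ∫⁻ t in Ioi a, min (f t) (g t) ≤ (∫⁻ t in Ioc a T, f t) + ∫⁻ t in Ioi T, g t := by
  rw [← Ioc_union_Ioi_eq_Ioi haT, lintegral_union measurableSet_Ioi (Ioc_disjoint_Ioi le_rfl)]
  gcongr with t t
  · exact min_le_left _ _
  · exact min_le_right _ _

lemma setLIntegral_Ioi_mul_exp_neg_mul (hc : 0 < c) {A : ℝ} (hA : 0 ≤ A) (T : ℝ) :
    ∫⁻ t in Ioi T, ENNReal.ofReal (A * exp (-(c * t))) =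
      ENNReal.ofReal (A * exp (-(c * T)) / c) := by
  simp_rw [← neg_mul]
  rw [← ofReal_integral_eq_lintegral_ofReal ((exp_neg_integrableOn_Ioi T hc).const_mul A)
      (Eventually.of_forall fun t => by positivity),
    integral_const_mul, integral_exp_mul_Ioi (by linarith)]
  congr 1
  field_simp

lemma setLIntegral_Ioi_min_mul_exp_neg_mul_le (hc : 0 < c) {K : ℝ} (hK : 1 ≤ K) :
    ∫⁻ t in Ioi 0, ENNReal.ofReal (min K (K ^ 2 / 2 * exp (-(c * t)))) ≤
      ENNReal.ofReal ((K * log K + K / 2) / c) := by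
  have hK0 : 0 < K := by linarith
  have hT : 0 ≤ log K / c := div_nonneg (log_nonneg hK) hc.le
  -- split at `T = log K / c`, where `K² e^{-cT} / 2 = K / 2`
  have hexp : exp (-(c * (log K / c))) = K⁻¹ := by
    rw [mul_div_cancel₀ _ hc.ne', exp_neg, exp_log hK0]
  simp_rw [ENNReal.ofReal_min]
  refine (setLIntegral_Ioi_min_le hT _ _).trans (le_of_eq ?_)
  rw [setLIntegral_const, Real.volume_Ioc, setLIntegral_Ioi_mul_exp_neg_mul hc (by positivity),
    hexp, ← ENNReal.ofReal_mul hK0.le, ← ENNReal.ofReal_add (by positivity) (by positivity)]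
  congr 1
  field_simp
  ring

lemma setLIntegral_Ioi_natCast_min_mul_exp_neg_mul_le (hc : 0 < c) (k : ℕ) :
    ∫⁻ t in Ioi 0, ENNReal.ofReal (min (k : ℝ) ((k : ℝ) ^ 2 / 2 * exp (-(c * t)))) ≤
      ENNReal.ofReal ((k * log k + k / 2) / c) := by
  rcases Nat.eq_zero_or_pos k with rfl | hk
  · simp
  · exact setLIntegral_Ioi_min_mul_exp_neg_mul_le hc (by exact_mod_cast hk)

end Integrals

theorem stmt12_general (p : ℕ → ℝ) (hp : ∀ k, 0 ≤ p k) (hsum : HasSum p 1)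
    (m : ℝ) (hm : HasSum (fun k : ℕ => (k : ℝ) * p k) m)
    (β : ℝ) (α : ℝ) (hα : α = β * (1 - m))
    (φ : ℝ → ℝ)
    (hφ : ∀ u ∈ Set.Ioc (0:ℝ) 1,
      φ u = β * ((∑' k : ℕ, p k * (1 - u) ^ k) - (1 - u)) / u - α)
    (hLlogL : Summable (fun k : ℕ => (k : ℝ) * Real.log k * p k)) :
    ∀ c : ℝ, 0 < c →
      (∫⁻ t in Set.Ioi (0:ℝ), ENNReal.ofReal (φ (Real.exp (-(c * t))))) < ⊤ := by
  intro c hc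
  set F : ℕ → ℝ → ℝ≥0∞ := fun k t =>
    ENNReal.ofReal (min (k : ℝ) ((k : ℝ) ^ 2 / 2 * exp (-(c * t))))
  have hpointwise : ∀ t ∈ Ioi (0 : ℝ),
      ENNReal.ofReal (φ (exp (-(c * t)))) ≤
        ENNReal.ofReal β * ∑' k, ENNReal.ofReal (p k) * F k t := by
    intro t ht
    have hu1 : exp (-(c * t)) ≤ 1 := exp_le_one_iff.2 (by nlinarith [mem_Ioi.1 ht])
    rw [hφ _ ⟨exp_pos _, hu1⟩, hα]
    simp_rw [F, ← ENNReal.ofReal_mul (hp _)]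
    exact ofReal_le_mul_tsum_ofReal_mul_min hp hsum hm β (exp_pos _) hu1
  have hbound : Summable fun k : ℕ => p k * ((k * log k + k / 2) / c) :=
    ((hLlogL.add (hm.summable.div_const 2)).div_const c).congr fun k => by ring
  calc (∫⁻ t in Ioi 0, ENNReal.ofReal (φ (exp (-(c * t)))))
      ≤ ∫⁻ t in Ioi 0, ENNReal.ofReal β * ∑' k, ENNReal.ofReal (p k) * F k t :=
        setLIntegral_mono' measurableSet_Ioi hpointwise
    _ = ENNReal.ofReal β * ∑' k, ENNReal.ofReal (p k) * ∫⁻ t in Ioi 0, F k t := by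
        rw [lintegral_const_mul' _ _ ENNReal.ofReal_ne_top,
          lintegral_tsum fun k => (by fun_prop : Measurable (F k)).const_mul _ |>.aemeasurable]
        simp_rw [lintegral_const_mul' _ _ ENNReal.ofReal_ne_top]
    _ ≤ ENNReal.ofReal β * ∑' k : ℕ, ENNReal.ofReal (p k * ((k * log k + k / 2) / c)) := by
        gcongr with k
        rw [ENNReal.ofReal_mul (hp k)]
        gcongr
        exact setLIntegral_Ioi_natCast_min_mul_exp_neg_mul_le hc k
    _ < ⊤ := ENNReal.mul_lt_top ENNReal.ofReal_lt_top hbound.tsum_ofReal_lt_top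

/-- With the notation of the subcritical branching setup: assume the `L log L`
condition `Σ_{k=1}^∞ k·(log k)·p_k < ∞`. Then for every `c > 0`,
`∫_0^∞ φ(e^{−ct}) dt < ∞`. -/
theorem stmt12 (p : ℕ → ℝ) (hp : ∀ k, 0 ≤ p k) (hsum : HasSum p 1)
    (m : ℝ) (hm : HasSum (fun k : ℕ => (k : ℝ) * p k) m) (hm0 : 0 < m) (hm1 : m < 1)
    (β : ℝ) (hβ : 0 < β) (α : ℝ) (hα : α = β * (1 - m))
    (φ : ℝ → ℝ) (hφ0 : φ 0 = 0)
    (hφ : ∀ u ∈ Set.Ioc (0:ℝ) 1,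
      φ u = β * ((∑' k : ℕ, p k * (1 - u) ^ k) - (1 - u)) / u - α)
    (hLlogL : Summable (fun k : ℕ => (k : ℝ) * Real.log k * p k)) :
    ∀ c : ℝ, 0 < c →
      (∫⁻ t in Set.Ioi (0:ℝ), ENNReal.ofReal (φ (Real.exp (-(c * t))))) < ⊤ :=
  stmt12_general p hp hsum m hm β α hα φ hφ hLlogL
end

section
/- Let g : [0,∞) → (0,1] be differentiable with g(0) = 1 and g′(t) = −Φ(g(t)) for all t ≥ 0. Then the limit L := lim_{t→∞} e^{αt} g(t) exists in [0,1]; moreover L > 0 if and only if ∫_0^∞ φ(g(s)) ds < ∞, in which case L = exp( −∫_0^∞ φ(g(s)) ds ). -/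
open MeasureTheory Filter Set
open scoped ENNReal Topology

/-!
Since `φ(u) = Φ(u)/u − α`, the function `log g` has derivative `−α − φ(g)`, hence
`e^{αt} g(t) = exp (−∫₀ᵗ φ(g(s)) ds)`. The generating function lies above its tangent at `1`,
`f(v) ≥ 1 + m (v − 1)`, which says `Φ(u) ≥ α u`, i.e. `φ ≥ 0`. So `∫₀ᵗ φ(g)` increases to
`∫₀^∞ φ(g) ∈ [0, ∞]` by monotone convergence, and the limit is `exp` of minus this integral,
which is `0` exactly when the integral diverges.
-/

lemma continuousOn_tsum_mul_pow {a : ℕ → ℝ} (ha : Summable fun k => ‖a k‖) :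
    ContinuousOn (fun v : ℝ => ∑' k, a k * v ^ k) (Icc (-1) 1) := by
  rw [continuousOn_iff_continuous_domRestrict]
  refine continuous_tsum (fun k => by fun_prop) ha fun k ⟨v, hv⟩ => ?_
  rw [norm_mul, norm_pow]
  exact mul_le_of_le_one_right (norm_nonneg _) (pow_le_one₀ (norm_nonneg _) (abs_le.2 hv))

lemma one_add_mul_sub_one_le_tsum_mul_pow {p : ℕ → ℝ} (hp : ∀ k, 0 ≤ p k) (hsum : HasSum p 1)
    {m : ℝ} (hm : HasSum (fun k : ℕ => (k : ℝ) * p k) m) {v : ℝ} (hv : v ∈ Icc (0:ℝ) 1) :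
    1 + m * (v - 1) ≤ ∑' k, p k * v ^ k := by
  have hpow : HasSum (fun k => p k * v ^ k) (∑' k, p k * v ^ k) :=
    (Summable.of_nonneg_of_le (fun k => mul_nonneg (hp k) (pow_nonneg hv.1 k))
      (fun k => mul_le_of_le_one_right (hp k) (pow_le_one₀ hv.1 hv.2)) hsum.summable).hasSum
  have hline : HasSum (fun k => p k + (k : ℝ) * p k * (v - 1)) (1 + m * (v - 1)) :=
    hsum.add (hm.mul_right _)
  refine hasSum_le (fun k => ?_) hline hpow
  have bernoulli := one_add_mul_le_pow (show (-2:ℝ) ≤ v - 1 by linarith [hv.1]) k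
  rw [add_sub_cancel] at bernoulli
  nlinarith [hp k]

lemma exp_mul_mul_eq_exp_neg_intervalIntegral {g ψ : ℝ → ℝ} {α : ℝ} (hg0 : g 0 = 1)
    (hpos : ∀ t, 0 ≤ t → 0 < g t) (hψ : ContinuousOn ψ (Ici 0))
    (hderiv : ∀ t, 0 ≤ t → HasDerivAt g (-((α + ψ t) * g t)) t) {t : ℝ} (ht : 0 ≤ t) :
    Real.exp (α * t) * g t = Real.exp (-∫ s in (0:ℝ)..t, ψ s) := by
  have hlog : ∀ s ∈ uIcc 0 t, HasDerivAt (fun x => α * x + Real.log (g x)) (-ψ s) s := by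
    intro s hs
    rw [uIcc_of_le ht] at hs
    have hgs := hpos s hs.1
    refine (((hasDerivAt_id' s).const_mul α).add ((hderiv s hs.1).log hgs.ne')).congr_deriv ?_
    field_simp
    ring
  have hint : IntervalIntegrable (fun s => -ψ s) volume 0 t :=
    ((hψ.mono fun s hs => (uIcc_of_le ht ▸ hs).1).intervalIntegrable).neg
  have hftc := intervalIntegral.integral_eq_sub_of_hasDerivAt hlog hint
  rw [intervalIntegral.integral_neg, hg0, Real.log_one] at hftc
  rw [hftc, Real.exp_sub, Real.exp_add, Real.exp_log (hpos t ht)]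
  simp

lemma tendsto_ofReal_intervalIntegral_lintegral_Ioi {ψ : ℝ → ℝ} {a : ℝ}
    (hnn : ∀ s, a ≤ s → 0 ≤ ψ s) (hψ : ContinuousOn ψ (Ici a)) :
    Tendsto (fun t => ENNReal.ofReal (∫ s in a..t, ψ s)) atTop
      (𝓝 (∫⁻ s in Ioi a, ENNReal.ofReal (ψ s))) := by
  have hmeas : AEStronglyMeasurable ψ (volume.restrict (Ioi a)) :=
    (hψ.mono Ioi_subset_Ici_self).aestronglyMeasurable measurableSet_Ioi
  refine ((aecover_Iic tendsto_id).lintegral_tendsto_of_countably_generated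
    hmeas.aemeasurable.ennreal_ofReal).congr' ?_
  filter_upwards [eventually_ge_atTop a] with t ht
  rw [Measure.restrict_restrict measurableSet_Iic, Iic_inter_Ioi,
    intervalIntegral.integral_of_le ht, ofReal_integral_eq_lintegral_ofReal]
  · rfl
  · exact ((hψ.mono Icc_subset_Ici_self).integrableOn_Icc (μ := volume)).mono_set
      Ioc_subset_Icc_self
  · exact (ae_restrict_mem measurableSet_Ioc).mono fun s hs => hnn s hs.1.le

lemma exists_tendsto_exp_neg_intervalIntegral {ψ : ℝ → ℝ} {a : ℝ}
    (hnn : ∀ s, a ≤ s → 0 ≤ ψ s) (hψ : ContinuousOn ψ (Ici a)) :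
    ∃ L ∈ Icc (0:ℝ) 1, Tendsto (fun t => Real.exp (-∫ s in a..t, ψ s)) atTop (𝓝 L) ∧
      (0 < L ↔ (∫⁻ s in Ioi a, ENNReal.ofReal (ψ s)) < ⊤) ∧
      ((∫⁻ s in Ioi a, ENNReal.ofReal (ψ s)) < ⊤ → L = Real.exp (-∫ s in Ioi a, ψ s)) := by
  have hlim := tendsto_ofReal_intervalIntegral_lintegral_Ioi hnn hψ
  by_cases hfin : (∫⁻ s in Ioi a, ENNReal.ofReal (ψ s)) < ⊤
  · have hprim : Tendsto (fun t => ∫ s in a..t, ψ s) atTop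
        (𝓝 (∫⁻ s in Ioi a, ENNReal.ofReal (ψ s)).toReal) := by
      refine ((ENNReal.tendsto_toReal hfin.ne).comp hlim).congr' ?_
      filter_upwards [eventually_ge_atTop a] with t ht
      exact ENNReal.toReal_ofReal
        (intervalIntegral.integral_nonneg ht fun s hs => hnn s hs.1)
    refine ⟨Real.exp (-(∫⁻ s in Ioi a, ENNReal.ofReal (ψ s)).toReal),
      ⟨(Real.exp_pos _).le, Real.exp_le_one_iff.2 (neg_nonpos.2 ENNReal.toReal_nonneg)⟩,
      (Real.continuous_exp.tendsto _).comp hprim.neg, iff_of_true (Real.exp_pos _) hfin,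
      fun _ => ?_⟩
    rw [integral_eq_lintegral_of_nonneg_ae
      ((ae_restrict_mem measurableSet_Ioi).mono fun s hs => hnn s (le_of_lt hs))
      ((hψ.mono Ioi_subset_Ici_self).aestronglyMeasurable measurableSet_Ioi)]
  · rw [not_lt_top_iff.1 hfin, ENNReal.tendsto_ofReal_nhds_top] at hlim
    exact ⟨0, ⟨le_rfl, zero_le_one⟩,
      Real.tendsto_exp_atBot.comp (tendsto_neg_atTop_atBot.comp hlim),
      iff_of_false (lt_irrefl 0) hfin, fun h => absurd h hfin⟩

theorem stmt14_general (p : ℕ → ℝ) (hp : ∀ k, 0 ≤ p k) (hsum : HasSum p 1)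
    (m : ℝ) (hm : HasSum (fun k : ℕ => (k : ℝ) * p k) m)
    (β : ℝ) (hβ : 0 < β) (α : ℝ) (hα : α = β * (1 - m))
    (Φ : ℝ → ℝ)
    (hΦ : ∀ u ∈ Set.Icc (0:ℝ) 1,
      Φ u = β * ((∑' k : ℕ, p k * (1 - u) ^ k) - (1 - u)))
    (φ : ℝ → ℝ)
    (hφ : ∀ u ∈ Set.Ioc (0:ℝ) 1, φ u = Φ u / u - α)
    (g : ℝ → ℝ) (hg0 : g 0 = 1) (hgmem : ∀ t : ℝ, 0 ≤ t → g t ∈ Set.Ioc (0:ℝ) 1)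
    (hgderiv : ∀ t : ℝ, 0 ≤ t → HasDerivAt g (-(Φ (g t))) t) :
    ∃ L ∈ Set.Icc (0:ℝ) 1,
      Tendsto (fun t : ℝ => Real.exp (α * t) * g t) atTop (nhds L) ∧
      (0 < L ↔ (∫⁻ s in Set.Ioi (0:ℝ), ENNReal.ofReal (φ (g s))) < ⊤) ∧
      ((∫⁻ s in Set.Ioi (0:ℝ), ENNReal.ofReal (φ (g s))) < ⊤ →
        L = Real.exp (-(∫ s in Set.Ioi (0:ℝ), φ (g s)))) := by
  have hφ_eq : ∀ u ∈ Ioc (0:ℝ) 1, φ u = β * ((∑' k, p k * (1 - u) ^ k) - (1 - u)) / u - α :=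
    fun u hu => by rw [hφ u hu, hΦ u (Ioc_subset_Icc_self hu)]
  have hφ_cont : ContinuousOn φ (Ioc 0 1) := by
    refine ContinuousOn.congr ?_ hφ_eq
    have hf : ContinuousOn (fun u : ℝ => ∑' k, p k * (1 - u) ^ k) (Ioc 0 1) :=
      (continuousOn_tsum_mul_pow hsum.summable.abs).comp (continuousOn_const.sub continuousOn_id)
        fun u hu => ⟨by linarith [hu.2], by linarith [hu.1]⟩
    exact ((continuousOn_const.mul (hf.sub (continuousOn_const.sub continuousOn_id))).div
      continuousOn_id fun u hu => hu.1.ne').sub continuousOn_const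
  have hφ_nonneg : ∀ u ∈ Ioc (0:ℝ) 1, 0 ≤ φ u := by
    intro u hu
    have tangent := one_add_mul_sub_one_le_tsum_mul_pow hp hsum hm (v := 1 - u)
      ⟨by linarith [hu.2], by linarith [hu.1]⟩
    rw [hφ_eq u hu, hα, sub_nonneg, le_div_iff₀ hu.1]
    nlinarith
  have hg_cont : ContinuousOn g (Ici 0) :=
    fun t ht => (hgderiv t ht).continuousAt.continuousWithinAt
  have hψ_cont : ContinuousOn (fun s => φ (g s)) (Ici 0) :=
    hφ_cont.comp hg_cont fun t ht => hgmem t ht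
  obtain ⟨L, hL, hlim, hpos, hval⟩ :=
    exists_tendsto_exp_neg_intervalIntegral (fun s hs => hφ_nonneg _ (hgmem s hs)) hψ_cont
  refine ⟨L, hL, hlim.congr' ?_, hpos, hval⟩
  filter_upwards [eventually_ge_atTop 0] with t ht
  refine (exp_mul_mul_eq_exp_neg_intervalIntegral hg0 (fun s hs => (hgmem s hs).1) hψ_cont
    (fun s hs => ?_) ht).symm
  have hgs := hgmem s hs
  convert hgderiv s hs using 2
  rw [hφ _ hgs, add_sub_cancel, div_mul_cancel₀ _ hgs.1.ne']

/-- With the notation of the subcritical branching setup: let `g : [0,∞) → (0,1]`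
be differentiable with `g(0) = 1` and `g′(t) = −Φ(g(t))` for all `t ≥ 0`. Then the
limit `L := lim_{t→∞} e^{αt} g(t)` exists in `[0,1]`; moreover `L > 0` if and only
if `∫_0^∞ φ(g(s)) ds < ∞`, in which case `L = exp( −∫_0^∞ φ(g(s)) ds )`. -/
theorem stmt14 (p : ℕ → ℝ) (hp : ∀ k, 0 ≤ p k) (hsum : HasSum p 1)
    (m : ℝ) (hm : HasSum (fun k : ℕ => (k : ℝ) * p k) m) (hm0 : 0 < m) (hm1 : m < 1)
    (β : ℝ) (hβ : 0 < β) (α : ℝ) (hα : α = β * (1 - m))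
    (Φ : ℝ → ℝ)
    (hΦ : ∀ u ∈ Set.Icc (0:ℝ) 1,
      Φ u = β * ((∑' k : ℕ, p k * (1 - u) ^ k) - (1 - u)))
    (φ : ℝ → ℝ) (hφ0 : φ 0 = 0)
    (hφ : ∀ u ∈ Set.Ioc (0:ℝ) 1, φ u = Φ u / u - α)
    (g : ℝ → ℝ) (hg0 : g 0 = 1) (hgmem : ∀ t : ℝ, 0 ≤ t → g t ∈ Set.Ioc (0:ℝ) 1)
    (hgderiv : ∀ t : ℝ, 0 ≤ t → HasDerivAt g (-(Φ (g t))) t) :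
    ∃ L ∈ Set.Icc (0:ℝ) 1,
      Tendsto (fun t : ℝ => Real.exp (α * t) * g t) atTop (nhds L) ∧
      (0 < L ↔ (∫⁻ s in Set.Ioi (0:ℝ), ENNReal.ofReal (φ (g s))) < ⊤) ∧
      ((∫⁻ s in Set.Ioi (0:ℝ), ENNReal.ofReal (φ (g s))) < ⊤ →
        L = Real.exp (-(∫ s in Set.Ioi (0:ℝ), φ (g s)))) :=
  stmt14_general p hp hsum m hm β hβ α hα Φ hΦ φ hφ g hg0 hgmem hgderiv
end
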